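/- Let n ≥ 2 be an integer and let F be a smooth real-valued function on the upper half-space {x ∈ ℝⁿ : xₙ > 0}. Suppose that on the upper half-space: for all i ≠ j with i, j < n, ∂ᵢ∂ⱼF = 0, and for every i < n, ∂ᵢ∂ₙF + (1/xₙ)∂ᵢF = 0. Then there exist smooth functions C₁, …, C_{n−1} : ℝ → ℝ and B : (0,∞) → ℝ such that for all x in the upper half-space: F(x₁, …, xₙ) = (1/xₙ)·Σ_{i=1}^{n−1} Cᵢ(xᵢ) + B(xₙ). -/

import Mathlib

open Set

/-- Partial derivative in the `i`-th coordinate direction. -/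
noncomputable def pd {m : ℕ} (i : Fin m) (f : (Fin m → ℝ) → ℝ) (x : Fin m → ℝ) : ℝ :=
  deriv (fun t => f (Function.update x i t)) (x i)

namespace Stmt14

variable {m : ℕ}

/-- The upper half space. -/
def U (m : ℕ) : Set (Fin (m + 1) → ℝ) := {x | 0 < x (Fin.last m)}

lemma isOpen_U : IsOpen (U m) := isOpen_Ioi.preimage (continuous_apply _)

lemma hasDerivAt_update (x : Fin (m + 1) → ℝ) (i : Fin (m + 1)) (t : ℝ) :
    HasDerivAt (fun s => Function.update x i s) (Pi.single i 1 : Fin (m + 1) → ℝ) t := by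
  rw [hasDerivAt_pi]
  intro j
  rcases eq_or_ne j i with rfl | hj
  · simpa [Function.update_self] using (hasDerivAt_id' t)
  · simp only [Function.update_apply, if_neg hj, Pi.single_eq_of_ne hj]
    exact hasDerivAt_const t _

lemma continuous_update_line (y : Fin (m + 1) → ℝ) (j : Fin (m + 1)) :
    Continuous fun t : ℝ => Function.update y j t := by
  refine continuous_pi fun k => ?_
  rcases eq_or_ne k j with rfl | hk
  · simpa [Function.update_self] using continuous_id'
  · simp only [Function.update_apply, if_neg hk]
    exact continuous_const

lemma hasDerivAt_comp_update {f : (Fin (m + 1) → ℝ) → ℝ} {x : Fin (m + 1) → ℝ}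
    {i : Fin (m + 1)} {t : ℝ} (hf : DifferentiableAt ℝ f (Function.update x i t)) :
    HasDerivAt (fun s => f (Function.update x i s))
      (fderiv ℝ f (Function.update x i t) (Pi.single i 1)) t := by
  have h := hf.hasFDerivAt.comp_hasDerivAt t (hasDerivAt_update x i t)
  simpa [Function.comp_def] using h

lemma pd_eq_fderiv {f : (Fin (m + 1) → ℝ) → ℝ} {x : Fin (m + 1) → ℝ} (i : Fin (m + 1))
    (hf : DifferentiableAt ℝ f x) :
    pd i f x = fderiv ℝ f x (Pi.single i 1) := by
  have h := hasDerivAt_comp_update (f := f) (x := x) (i := i) (t := x i)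
    (by rwa [Function.update_eq_self])
  rw [Function.update_eq_self] at h
  exact h.deriv

section Main

variable {F : (Fin (m + 1) → ℝ) → ℝ} (hF : ContDiffOn ℝ (⊤ : ℕ∞) F (U m))

include hF

lemma diffF {y : Fin (m + 1) → ℝ} (hy : y ∈ U m) : DifferentiableAt ℝ F y :=
  (hF.differentiableOn (by simp)).differentiableAt (isOpen_U.mem_nhds hy)

lemma diff_fderiv {y : Fin (m + 1) → ℝ} (hy : y ∈ U m) :
    DifferentiableAt ℝ (fderiv ℝ F) y :=
  (((hF.fderiv_of_isOpen isOpen_U (WithTop.coe_le_coe.2 (le_top : ((1:ℕ∞)+1) ≤ ⊤) : (1 : WithTop ℕ∞) + 1 ≤ ((⊤ : ℕ∞) : WithTop ℕ∞))).differentiableOn one_ne_zero)).differentiableAt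
    (isOpen_U.mem_nhds hy)

lemma hasDerivAt_fderiv_line {y : Fin (m + 1) → ℝ} (hy : y ∈ U m) (j : Fin (m + 1))
    (v : Fin (m + 1) → ℝ) :
    HasDerivAt (fun t => fderiv ℝ F (Function.update y j t) v)
      (fderiv ℝ (fderiv ℝ F) y (Pi.single j 1) v) (y j) := by
  have h1 : HasDerivAt (fun t => fderiv ℝ F (Function.update y j t))
      (fderiv ℝ (fderiv ℝ F) y (Pi.single j 1)) (y j) := by
    have hd : HasFDerivAt (fderiv ℝ F) (fderiv ℝ (fderiv ℝ F) y)
        (Function.update y j (y j)) := by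
      rw [Function.update_eq_self]; exact (diff_fderiv hF hy).hasFDerivAt
    have := hd.comp_hasDerivAt (y j) (hasDerivAt_update y j (y j))
    simpa [Function.comp_def] using this
  have h2 := ((ContinuousLinearMap.apply ℝ ℝ v).hasFDerivAt.comp_hasDerivAt (y j) h1)
  simpa [Function.comp_def] using h2

lemma fderiv2_symm {y : Fin (m + 1) → ℝ} (hy : y ∈ U m) (v w : Fin (m + 1) → ℝ) :
    fderiv ℝ (fderiv ℝ F) y v w = fderiv ℝ (fderiv ℝ F) y w v := by
  refine second_derivative_symmetric_of_eventually (f := F) ?_ (diff_fderiv hF hy).hasFDerivAt v w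
  filter_upwards [isOpen_U.mem_nhds hy] with z hz
  exact (diffF hF hz).hasFDerivAt

lemma pd_pd_eq {y : Fin (m + 1) → ℝ} (hy : y ∈ U m) (j k : Fin (m + 1)) :
    pd j (pd k F) y = fderiv ℝ (fderiv ℝ F) y (Pi.single j 1) (Pi.single k 1) := by
  have hopen : IsOpen {t : ℝ | Function.update y j t ∈ U m} :=
    isOpen_U.preimage (continuous_update_line y j)
  have hmem : y j ∈ {t : ℝ | Function.update y j t ∈ U m} := by
    simp only [mem_setOf_eq, Function.update_eq_self]; exact hy
  have hev : (fun t => pd k F (Function.update y j t)) =ᶠ[nhds (y j)]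
      (fun t => fderiv ℝ F (Function.update y j t) (Pi.single k 1)) := by
    filter_upwards [hopen.mem_nhds hmem] with t ht
    exact pd_eq_fderiv k (diffF hF ht)
  rw [pd, hev.deriv_eq]
  exact (hasDerivAt_fderiv_line hF hy j (Pi.single k 1)).deriv


end Main

lemma const_line_free (G : (Fin (m + 1) → ℝ) → ℝ) (j : Fin (m + 1)) (hj : j ≠ Fin.last m)
    (hline : ∀ y ∈ U m, HasDerivAt (fun t => G (Function.update y j t)) 0 (y j))
    {x : Fin (m + 1) → ℝ} (hx : x ∈ U m) (c : ℝ) :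
    G (Function.update x j c) = G x := by
  have hmem : ∀ t : ℝ, Function.update x j t ∈ U m := fun t => by
    have : Function.update x j t (Fin.last m) = x (Fin.last m) :=
      Function.update_of_ne (Ne.symm hj) _ _
    simpa [U, this] using hx
  have key : ∀ t : ℝ, HasDerivAt (fun s => G (Function.update x j s)) 0 t := by
    intro t
    have h := hline (Function.update x j t) (hmem t)
    simpa [Function.update_idem, Function.update_self] using h
  have hconst := is_const_of_deriv_eq_zero (f := fun s => G (Function.update x j s))
    (fun t => (key t).differentiableAt) (fun t => (key t).deriv) c (x j)
  rw [Function.update_eq_self] at hconst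
  exact hconst

lemma const_line_last (G : (Fin (m + 1) → ℝ) → ℝ)
    (hline : ∀ y ∈ U m,
      HasDerivAt (fun t => G (Function.update y (Fin.last m) t)) 0 (y (Fin.last m)))
    {x : Fin (m + 1) → ℝ} (hx : x ∈ U m) {c : ℝ} (hc : 0 < c) :
    G (Function.update x (Fin.last m) c) = G x := by
  set N := Fin.last m with hN
  set φ : ℝ → ℝ := fun s => G (Function.update x N s) with hφ
  have key : ∀ t : ℝ, 0 < t → HasDerivAt φ 0 t := by
    intro t ht
    have hmem : Function.update x N t ∈ U m := by
      simp only [U, mem_setOf_eq, ← hN, Function.update_self]; exact ht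
    have h := hline (Function.update x N t) hmem
    simpa [Function.update_idem, Function.update_self] using h
  have main : ∀ a b : ℝ, 0 < a → a ≤ b → φ b = φ a := by
    intro a b ha hab
    have hcont : ContinuousOn φ (Icc a b) := fun t ht =>
      ((key t (lt_of_lt_of_le ha ht.1)).continuousAt.continuousWithinAt)
    have hderiv : ∀ t ∈ Ico a b, HasDerivWithinAt φ 0 (Ici t) t := fun t ht =>
      (key t (lt_of_lt_of_le ha ht.1)).hasDerivWithinAt
    exact constant_of_has_deriv_right_zero hcont hderiv b (right_mem_Icc.2 hab)
  have hxN : 0 < x N := hx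
  have : φ c = φ (x N) := by
    rcases le_total c (x N) with h | h
    · exact (main c (x N) hc h).symm
    · exact main (x N) c hxN h
  calc G (Function.update x N c) = φ c := rfl
    _ = φ (x N) := this
    _ = G x := by rw [hφ]; simp only [Function.update_eq_self]

lemma const_of_lines (G : (Fin (m + 1) → ℝ) → ℝ) (i : Fin (m + 1)) (hi : i ≠ Fin.last m)
    (hline : ∀ j : Fin (m + 1), j ≠ i → ∀ y ∈ U m,
      HasDerivAt (fun t => G (Function.update y j t)) 0 (y j)) :
    ∀ x ∈ U m, G x = G (Function.update (Function.update (fun _ => 0) (Fin.last m) 1) i (x i)) := by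
  intro x hx
  have hvLast : ((Fin.last m : Fin (m + 1)) : ℕ) = m := rfl
  have step : ∀ k : ℕ, k ≤ m → G x = G (fun j : Fin (m + 1) => if (j : ℕ) < k ∧ j ≠ i then 0 else x j) := by
    intro k
    induction k with
    | zero =>
      intro _
      have h0 : (fun j : Fin (m + 1) => if (j : ℕ) < 0 ∧ j ≠ i then 0 else x j) = x := by
        funext j; simp
      rw [h0]
    | succ k ih =>
      intro hk
      have hk' : k ≤ m := by omega
      set z : Fin (m + 1) → ℝ := fun j : Fin (m + 1) => if (j : ℕ) < k ∧ j ≠ i then 0 else x j with hz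
      have hzN : z (Fin.last m) = x (Fin.last m) := by
        simp only [hz]
        rw [if_neg]
        rintro ⟨hlt, -⟩
        omega
      have hzU : z ∈ U m := by simpa [U, hzN] using hx
      have hmain : G z = G (fun j : Fin (m + 1) => if (j : ℕ) < k + 1 ∧ j ≠ i then 0 else x j) := by
        by_cases hki : (⟨k, by omega⟩ : Fin (m + 1)) = i
        · congr 1
          funext j
          rcases eq_or_ne j i with rfl | hj
          · simp [hz]
          · have hvk : (j : ℕ) ≠ k := by
              intro h
              exact hj (Fin.ext (by rw [h, ← hki]))
            have : ((j : ℕ) < k + 1) ↔ ((j : ℕ) < k) := by omega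
            simp only [hz, this]
        · have hupd : (fun j : Fin (m + 1) => if (j : ℕ) < k + 1 ∧ j ≠ i then 0 else x j)
              = Function.update z ⟨k, by omega⟩ 0 := by
            funext j
            rcases eq_or_ne j ⟨k, by omega⟩ with rfl | hj
            · rw [Function.update_self, if_pos]
              exact ⟨by simp, hki⟩
            · rw [Function.update_of_ne hj]
              have hvk : (j : ℕ) ≠ k := by
                intro h
                exact hj (Fin.ext h)
              have : ((j : ℕ) < k + 1) ↔ ((j : ℕ) < k) := by omega
              simp only [hz, this]
          rw [hupd]
          refine (const_line_free G ⟨k, by omega⟩ ?_ (hline _ hki) hzU 0).symm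
          intro h
          have : k = m := by
            have := congrArg Fin.val h
            simpa using this
          omega
      rw [ih hk', hmain]
  have hstep := step m le_rfl
  set zm : Fin (m + 1) → ℝ := fun j : Fin (m + 1) => if (j : ℕ) < m ∧ j ≠ i then 0 else x j with hzm
  have hzmN : zm (Fin.last m) = x (Fin.last m) := by
    simp only [hzm]
    rw [if_neg]
    rintro ⟨hlt, -⟩
    omega
  have hzmU : zm ∈ U m := by simpa [U, hzmN] using hx
  have hlast : G (Function.update zm (Fin.last m) 1) = G zm :=
    const_line_last G (hline (Fin.last m) (Ne.symm hi)) hzmU one_pos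
  have hfinal : Function.update zm (Fin.last m) 1
      = Function.update (Function.update (fun _ => 0) (Fin.last m) 1) i (x i) := by
    funext j
    rcases eq_or_ne j (Fin.last m) with rfl | hjN
    · rw [Function.update_self, Function.update_of_ne (Ne.symm hi), Function.update_self]
    · rw [Function.update_of_ne hjN]
      rcases eq_or_ne j i with rfl | hji
      · rw [Function.update_self]
        simp only [hzm]
        rw [if_neg]
        rintro ⟨-, hne⟩
        exact hne rfl
      · rw [Function.update_of_ne hji, Function.update_of_ne hjN]
        simp only [hzm]
        rw [if_pos]
        refine ⟨?_, hji⟩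
        have h1 : (j : ℕ) < m + 1 := j.isLt
        have h2 : (j : ℕ) ≠ m := by
          intro h
          exact hjN (Fin.ext (by simpa using h))
        omega
  rw [hstep, ← hlast, hfinal]



/-- The point with coordinate `i` equal to `s`, last coordinate `1`, others `0`. -/
noncomputable def P (m : ℕ) (i : Fin (m + 1)) (s : ℝ) : Fin (m + 1) → ℝ :=
  Function.update (Function.update (fun _ => 0) (Fin.last m) 1) i s

lemma P_last {i : Fin (m + 1)} (hi : i ≠ Fin.last m) (s : ℝ) : P m i s (Fin.last m) = 1 := by
  rw [P, Function.update_of_ne (Ne.symm hi), Function.update_self]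

lemma P_mem {i : Fin (m + 1)} (hi : i ≠ Fin.last m) (s : ℝ) : P m i s ∈ U m := by
  show (0 : ℝ) < P m i s (Fin.last m)
  rw [P_last hi]
  exact one_pos

lemma contDiff_P (i : Fin (m + 1)) : ContDiff ℝ (⊤ : ℕ∞) (fun s => P m i s) := by
  apply contDiff_pi.2
  intro j
  rcases eq_or_ne j i with rfl | hj
  · simp only [P, Function.update_self]
    exact contDiff_id
  · have h : (fun s => P m i s j) = fun _ => Function.update (fun _ => (0:ℝ)) (Fin.last m) 1 j := by
      funext s
      rw [P, Function.update_of_ne hj]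
    rw [h]
    exact contDiff_const

end Stmt14

open Stmt14 in
/-- intermediate claim in the proof of Theorem 3.10: if the off-diagonal
components of the hyperbolic Hessian of `F` vanish on `ℍⁿ`, then
`F(x) = (1/xₙ)·Σᵢ Cᵢ(xᵢ) + B(xₙ)` for smooth functions `Cᵢ` and `B`. -/
theorem stmt_14 (n : ℕ) (hn : 2 ≤ n) (F : (Fin n → ℝ) → ℝ)
    (hF : ContDiffOn ℝ (⊤ : ℕ∞) F {x : Fin n → ℝ | 0 < x ⟨n - 1, by omega⟩})
    (h1 : ∀ i j : Fin n, (i : ℕ) < n - 1 → (j : ℕ) < n - 1 → i ≠ j →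
      ∀ x : Fin n → ℝ, 0 < x ⟨n - 1, by omega⟩ → pd i (pd j F) x = 0)
    (h2 : ∀ i : Fin n, (i : ℕ) < n - 1 → ∀ x : Fin n → ℝ, 0 < x ⟨n - 1, by omega⟩ →
      pd i (pd ⟨n - 1, by omega⟩ F) x + (1 / x ⟨n - 1, by omega⟩) * pd i F x = 0) :
    ∃ (C : Fin (n - 1) → ℝ → ℝ) (B : ℝ → ℝ),
      (∀ i : Fin (n - 1), ContDiff ℝ (⊤ : ℕ∞) (C i)) ∧ ContDiffOn ℝ (⊤ : ℕ∞) B (Ioi 0) ∧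
      ∀ x : Fin n → ℝ, 0 < x ⟨n - 1, by omega⟩ →
        F x = (1 / x ⟨n - 1, by omega⟩) * (∑ i : Fin (n - 1), C i (x (Fin.castLE (by omega) i)))
              + B (x ⟨n - 1, by omega⟩) := by
  obtain ⟨m, rfl⟩ : ∃ m, n = m + 1 := ⟨n - 1, by omega⟩
  have hm : 1 ≤ m := by omega
  have hFU : ContDiffOn ℝ (⊤ : ℕ∞) F (U m) := hF
  have hlastmk : (⟨m + 1 - 1, by omega⟩ : Fin (m + 1)) = Fin.last m := rfl
  simp only [hlastmk] at h1 h2 ⊢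
  -- step 1: second-derivative facts
  have h1' : ∀ i j : Fin (m + 1), (i : ℕ) < m → (j : ℕ) < m → i ≠ j → ∀ y ∈ U m,
      fderiv ℝ (fderiv ℝ F) y (Pi.single i 1) (Pi.single j 1) = 0 := by
    intro i j hi hj hij y hy
    rw [← pd_pd_eq hFU hy]
    exact h1 i j hi hj hij y hy
  have h2' : ∀ i : Fin (m + 1), (i : ℕ) < m → ∀ y ∈ U m,
      fderiv ℝ (fderiv ℝ F) y (Pi.single i 1) (Pi.single (Fin.last m) 1)
        = -(1 / y (Fin.last m)) * fderiv ℝ F y (Pi.single i 1) := by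
    intro i hi y hy
    have h := h2 i hi y hy
    rw [pd_pd_eq hFU hy, pd_eq_fderiv i (diffF hFU hy)] at h
    linarith
  -- step 2: x_N * ∂ᵢF depends only on x i
  have hgamma : ∀ i : Fin (m + 1), (i : ℕ) < m → ∀ x ∈ U m,
      x (Fin.last m) * fderiv ℝ F x (Pi.single i 1)
        = fderiv ℝ F (P m i (x i)) (Pi.single i 1) := by
    intro i hi
    have hiN : i ≠ Fin.last m := by
      intro h
      rw [h] at hi
      simp at hi
    have hline : ∀ j : Fin (m + 1), j ≠ i → ∀ y ∈ U m,
        HasDerivAt (fun t => (fun z => z (Fin.last m) * fderiv ℝ F z (Pi.single i 1))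
          (Function.update y j t)) 0 (y j) := by
      intro j hj y hy
      have hd1 := hasDerivAt_fderiv_line hFU hy j (Pi.single i 1)
      have hd2 : HasDerivAt (fun t => Function.update y j t (Fin.last m))
          ((Pi.single j 1 : Fin (m + 1) → ℝ) (Fin.last m)) (y j) :=
        hasDerivAt_pi.mp (Stmt14.hasDerivAt_update y j (y j)) (Fin.last m)
      have hd := hd2.mul hd1
      simp only [Function.update_eq_self] at hd
      have hzero : (Pi.single j 1 : Fin (m + 1) → ℝ) (Fin.last m)
            * fderiv ℝ F y (Pi.single i 1)
          + y (Fin.last m) * fderiv ℝ (fderiv ℝ F) y (Pi.single j 1) (Pi.single i 1) = 0 := by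
        rcases eq_or_ne j (Fin.last m) with rfl | hjN
        · rw [Pi.single_eq_same,
            fderiv2_symm hFU hy (Pi.single (Fin.last m) 1) (Pi.single i 1),
            h2' i hi y hy]
          have hyN : y (Fin.last m) ≠ 0 := ne_of_gt hy
          field_simp
          ring
        · rw [Pi.single_eq_of_ne (Ne.symm hjN)]
          have hjm : (j : ℕ) < m := by
            have ha : (j : ℕ) < m + 1 := j.isLt
            have hb : (j : ℕ) ≠ m := by
              intro h
              exact hjN (Fin.ext (by simpa using h))
            omega
          rw [h1' j i hjm hi hj y hy]
          ring
      exact hzero ▸ hd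
    intro x hx
    have h : x (Fin.last m) * fderiv ℝ F x (Pi.single i 1)
        = P m i (x i) (Fin.last m) * fderiv ℝ F (P m i (x i)) (Pi.single i 1) :=
      const_of_lines (fun z => z (Fin.last m) * fderiv ℝ F z (Pi.single i 1)) i hiN hline x hx
    rw [P_last hiN, one_mul] at h
    exact h
  -- step 3: one-coordinate decomposition
  have key : ∀ x ∈ U m, ∀ i : Fin (m + 1), (i : ℕ) < m →
      F x = F (Function.update x i 0)
        + (1 / x (Fin.last m)) * (F (P m i (x i)) - F (P m i 0)) := by
    intro x hx i hi
    have hiN : i ≠ Fin.last m := by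
      intro h
      rw [h] at hi
      simp at hi
    have hxN : (0 : ℝ) < x (Fin.last m) := hx
    have hupdU : ∀ s : ℝ, Function.update x i s ∈ U m := by
      intro s
      have hl : Function.update x i s (Fin.last m) = x (Fin.last m) :=
        Function.update_of_ne (Ne.symm hiN) _ _
      simpa [U, hl] using hx
    have hd : ∀ s : ℝ, HasDerivAt (fun t => F (Function.update x i t)
        - (1 / x (Fin.last m)) * F (P m i t)) 0 s := by
      intro s
      have hA : HasDerivAt (fun t => F (Function.update x i t))
          (fderiv ℝ F (Function.update x i s) (Pi.single i 1)) s :=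
        hasDerivAt_comp_update (diffF hFU (hupdU s))
      have hB : HasDerivAt (fun t => F (P m i t))
          (fderiv ℝ F (P m i s) (Pi.single i 1)) s :=
        hasDerivAt_comp_update (diffF hFU (P_mem hiN s))
      have hd0 := hA.sub (hB.const_mul (1 / x (Fin.last m)))
      have hzero : fderiv ℝ F (Function.update x i s) (Pi.single i 1)
          - (1 / x (Fin.last m)) * fderiv ℝ F (P m i s) (Pi.single i 1) = 0 := by
        have e1 := hgamma i hi (Function.update x i s) (hupdU s)
        simp only [Function.update_self, Function.update_of_ne (Ne.symm hiN)] at e1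
        rw [← e1]
        have hxN' : x (Fin.last m) ≠ 0 := ne_of_gt hxN
        field_simp
        ring
      exact hzero ▸ hd0
    have hconst := is_const_of_deriv_eq_zero
      (fun s => (hd s).differentiableAt) (fun s => (hd s).deriv) (x i) 0
    simp only [Function.update_eq_self] at hconst
    rw [mul_sub]
    linarith [hconst]
  -- the building blocks
  set Cf : Fin (m + 1) → ℝ → ℝ := fun i s => F (P m i s) - F (P m i 0) with hCf
  set B : ℝ → ℝ := fun t => F (Function.update (fun _ => (0:ℝ)) (Fin.last m) t) with hB
  -- step 4: full decomposition by induction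
  have main : ∀ x, x ∈ U m → ∀ k : ℕ, k ≤ m →
      F x = (1 / x (Fin.last m)) *
          (∑ j ∈ Finset.univ.filter (fun j : Fin (m + 1) => (j : ℕ) < k), Cf j (x j))
        + F (fun j : Fin (m + 1) => if (j : ℕ) < k then 0 else x j) := by
    intro x hx k
    induction k with
    | zero =>
      intro _
      have h0 : (fun j : Fin (m + 1) => if (j : ℕ) < 0 then 0 else x j) = x := by
        funext j
        simp
      have hflt : Finset.univ.filter (fun j : Fin (m + 1) => (j : ℕ) < 0) = ∅ := by
        ext j
        simp
      rw [h0, hflt]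
      simp
    | succ k ih =>
      intro hk
      have hk' : k ≤ m := by omega
      set z : Fin (m + 1) → ℝ := fun j : Fin (m + 1) => if (j : ℕ) < k then 0 else x j
        with hzdef
      have hzN : z (Fin.last m) = x (Fin.last m) := by
        simp only [hzdef, Fin.val_last]
        rw [if_neg]
        omega
      have hzU : z ∈ U m := by
        have : (0:ℝ) < z (Fin.last m) := by rw [hzN]; exact hx
        exact this
      have happ := key z hzU ⟨k, by omega⟩ (show k < m by omega)
      have hzk : z ⟨k, by omega⟩ = x ⟨k, by omega⟩ := by
        simp only [hzdef]
        rw [if_neg]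
        simp
      have hzupd : Function.update z ⟨k, by omega⟩ 0
          = fun j : Fin (m + 1) => if (j : ℕ) < k + 1 then 0 else x j := by
        funext j
        rcases eq_or_ne j ⟨k, by omega⟩ with rfl | hj
        · rw [Function.update_self, if_pos]
          simp
        · rw [Function.update_of_ne hj]
          have hvk : (j : ℕ) ≠ k := by
            intro h
            exact hj (Fin.ext h)
          have hiff : ((j : ℕ) < k + 1) ↔ ((j : ℕ) < k) := by omega
          simp only [hzdef, hiff]
      rw [hzN, hzk, hzupd] at happ
      have hins : Finset.univ.filter (fun j : Fin (m + 1) => (j : ℕ) < k + 1)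
          = insert (⟨k, by omega⟩ : Fin (m + 1))
              (Finset.univ.filter (fun j : Fin (m + 1) => (j : ℕ) < k)) := by
        ext j
        simp only [Finset.mem_filter, Finset.mem_insert, Finset.mem_univ, true_and]
        constructor
        · intro h
          rcases Nat.lt_succ_iff_lt_or_eq.mp h with h | h
          · exact Or.inr h
          · exact Or.inl (Fin.ext (by simpa using h))
        · rintro (rfl | h)
          · simp
          · omega
      rw [hins, Finset.sum_insert (by simp)]
      rw [ih hk', happ]
      ring
  -- assemble the answer
  refine ⟨fun i => Cf (Fin.castSucc i), B, ?_, ?_, ?_⟩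
  · -- smoothness of the Cᵢ
    intro i
    have hiN : Fin.castSucc i ≠ Fin.last m := by
      intro h
      have := congrArg Fin.val h
      simp only [Fin.coe_castSucc, Fin.val_last] at this
      omega
    have h1c : ContDiff ℝ (⊤ : ℕ∞) (fun s => F (P m (Fin.castSucc i) s)) := by
      have hcomp := ContDiffOn.comp (s := Set.univ) hFU
        ((contDiff_P (Fin.castSucc i)).contDiffOn) (fun s _ => P_mem hiN s)
      rw [contDiffOn_univ] at hcomp
      exact hcomp
    exact h1c.sub contDiff_const
  · -- smoothness of B
    have hmap : ContDiff ℝ (⊤ : ℕ∞)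
        (fun t : ℝ => Function.update (fun _ : Fin (m + 1) => (0:ℝ)) (Fin.last m) t) := by
      apply contDiff_pi.2
      intro j
      rcases eq_or_ne j (Fin.last m) with rfl | hj
      · simp only [Function.update_self]
        exact contDiff_id
      · have h : (fun t : ℝ =>
            Function.update (fun _ : Fin (m + 1) => (0:ℝ)) (Fin.last m) t j)
            = fun _ => (0:ℝ) := by
          funext t
          rw [Function.update_of_ne hj]
        rw [h]
        exact contDiff_const
    exact hFU.comp hmap.contDiffOn
      (fun t ht => by
        show (0:ℝ) < Function.update (fun _ : Fin (m + 1) => (0:ℝ)) (Fin.last m) t (Fin.last m)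
        rw [Function.update_self]
        exact ht)
  · -- the formula
    intro x hx
    have hx' : x ∈ U m := hx
    have hm0 := main x hx' m le_rfl
    have hzm : (fun j : Fin (m + 1) => if (j : ℕ) < m then 0 else x j)
        = Function.update (fun _ => (0:ℝ)) (Fin.last m) (x (Fin.last m)) := by
      funext j
      rcases eq_or_ne j (Fin.last m) with rfl | hj
      · rw [Function.update_self, if_neg]
        simp
      · have hb : (j : ℕ) ≠ m := by
          intro h
          exact hj (Fin.ext (by simpa using h))
        have hlt : (j : ℕ) < m := by
          have ha : (j : ℕ) < m + 1 := j.isLt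
          omega
        rw [Function.update_of_ne hj, if_pos hlt]
    have hsum : ∑ j ∈ Finset.univ.filter (fun j : Fin (m + 1) => (j : ℕ) < m), Cf j (x j)
        = ∑ i : Fin m, Cf (Fin.castSucc i) (x (Fin.castSucc i)) := by
      rw [Finset.sum_filter, Fin.sum_univ_castSucc]
      simp [Fin.is_lt]
    rw [hzm, hsum] at hm0
    exact hm0
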